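/- The language L' = { u^n 0^m h : n, m ≥ 0 and n ≥ 2^m − 1 } over the alphabet {u, 0, h} is not context-free. -/

import Mathlib

/-!
By the pumping lemma, a long word `u^(2^p - 1) 0^p h` of a context-free `L'` would have a
pumpable factor `v, z`. It cannot contain `h`, since every word of `L'` has exactly one. If it
contains a `0`, pumping up leaves more than `p` zeros, which need at least `2^(p+1) - 1` letters
`u`, while fewer than `2^p` are added to the `2^p - 1` present; otherwise pumping down removes
some `u` and leaves fewer than `2^p - 1` of them.

The pumping lemma is proved on parse forests of bounded height. Following a parse tree downwards,
always into a child carrying at least a `1/K` share of the yield (`K` bounds the right-hand sides),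
the yield shrinks by at most the factor `K` at each node where it shrinks at all; so a word longer
than `K^|rules|` forces some rule to be applied twice at such nodes, and the second application
sits inside a strictly larger context, which is the pump.
-/

inductive Alph : Type
  | u | z | h
deriving DecidableEq

/-- The regular language { u^n 0^m h : n, m ≥ 0 } (with `Alph.z` playing the role of `0`). -/
def Lu0h : Language Alph :=
  {w | ∃ n m : ℕ, w = List.replicate n Alph.u ++ List.replicate m Alph.z ++ [Alph.h]}

/-- The language L' = { u^n 0^m h : n ≥ 2^m − 1 }. -/
def Lcc' : Language Alph :=
  {w | ∃ n m : ℕ, w = List.replicate n Alph.u ++ List.replicate m Alph.z ++ [Alph.h] ∧ 2 ^ m - 1 ≤ n}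

/-- n-fold repetition of a word. -/
def listPow {α : Type*} (l : List α) (n : ℕ) : List α := (List.replicate n l).flatten

theorem listPow_succ {α : Type*} (l : List α) (n : ℕ) : listPow l (n + 1) = l ++ listPow l n := by
  simp [listPow, List.replicate_succ]

theorem listPow_succ' {α : Type*} (l : List α) (n : ℕ) : listPow l (n + 1) = listPow l n ++ l := by
  simp [listPow, List.replicate_succ']

namespace ContextFreeGrammar

variable {T : Type*}

/-- `g.Parses n α w`: the sentential form `α` derives the word `w` through a parse forest of
height at most `n`. -/
inductive Parses (g : ContextFreeGrammar T) : ℕ → List (Symbol T g.NT) → List T → Prop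
  | nil (n : ℕ) : Parses g n [] []
  | terminal {n : ℕ} {α : List (Symbol T g.NT)} {w : List T} (a : T) :
      Parses g n α w → Parses g n (.terminal a :: α) (a :: w)
  | nonterminal {n : ℕ} {r : ContextFreeRule T g.NT} {α : List (Symbol T g.NT)} {w₁ w₂ : List T}
      (hr : r ∈ g.rules) :
      Parses g n r.output w₁ → Parses g (n + 1) α w₂ →
      Parses g (n + 1) (.nonterminal r.input :: α) (w₁ ++ w₂)

variable {g : ContextFreeGrammar T}

namespace Parses

theorem derives {n : ℕ} {α : List (Symbol T g.NT)} {w : List T} (h : g.Parses n α w) :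
    g.Derives α (w.map .terminal) := by
  induction h with
  | nil => exact .refl _
  | terminal a _ ih => exact ih.append_left [.terminal a]
  | @nonterminal n r α w₁ w₂ hr _ _ ih₁ ih₂ =>
    have hstep : g.Produces (.nonterminal r.input :: α) (r.output ++ α) :=
      ⟨r, hr, by simpa using (ContextFreeRule.Rewrites.input_output (r := r)).append_right α⟩
    rw [List.map_append]
    exact hstep.trans_derives ((ih₁.append_right α).trans (ih₂.append_left _))

theorem mono {n m : ℕ} {α : List (Symbol T g.NT)} {w : List T} (h : g.Parses n α w)
    (hnm : n ≤ m) : g.Parses m α w := by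
  induction h generalizing m with
  | nil => exact nil m
  | terminal a _ ih => exact (ih hnm).terminal a
  | nonterminal hr _ _ ih₁ ih₂ =>
    obtain ⟨k, rfl⟩ := Nat.exists_eq_add_of_le' (Nat.one_le_of_lt hnm)
    exact nonterminal hr (ih₁ (by omega)) (ih₂ hnm)

theorem append {n : ℕ} {α β : List (Symbol T g.NT)} {w v : List T} (hα : g.Parses n α w)
    (hβ : g.Parses n β v) : g.Parses n (α ++ β) (w ++ v) := by
  induction hα with
  | nil => exact hβ
  | terminal a _ ih => exact (ih hβ).terminal a
  | nonterminal hr h₁ _ _ ih₂ => simpa using nonterminal hr h₁ (ih₂ hβ)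

theorem exists_of_append {n : ℕ} {α β : List (Symbol T g.NT)} {w : List T}
    (h : g.Parses n (α ++ β) w) :
    ∃ w₁ w₂, w = w₁ ++ w₂ ∧ g.Parses n α w₁ ∧ g.Parses n β w₂ := by
  induction α generalizing n w with
  | nil => exact ⟨[], w, rfl, nil n, h⟩
  | cons X α ih =>
    cases h with
    | terminal a h =>
      obtain ⟨w₁, w₂, rfl, h₁, h₂⟩ := ih h
      exact ⟨a :: w₁, w₂, rfl, h₁.terminal a, h₂⟩
    | nonterminal hr ho h =>
      obtain ⟨w₁, w₂, rfl, h₁, h₂⟩ := ih h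
      exact ⟨_ ++ w₁, w₂, (List.append_assoc ..).symm, nonterminal hr ho h₁, h₂⟩

theorem of_terminals (n : ℕ) (w : List T) : g.Parses n (w.map .terminal) w := by
  induction w with
  | nil => exact nil n
  | cons a w ih => exact ih.terminal a

theorem of_produces {n : ℕ} {α β : List (Symbol T g.NT)} {w : List T} (hαβ : g.Produces α β)
    (h : g.Parses n β w) : g.Parses (n + 1) α w := by
  obtain ⟨r, hr, hrw⟩ := hαβ
  obtain ⟨p, q, rfl, rfl⟩ := hrw.exists_parts
  obtain ⟨w₁, w₃, rfl, h₁₂, h₃⟩ := exists_of_append h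
  obtain ⟨w₁, w₂, rfl, h₁, h₂⟩ := exists_of_append h₁₂
  simpa using (h₁.mono n.le_succ).append (nonterminal hr h₂ (h₃.mono n.le_succ))

theorem exists_rule {n : ℕ} {A : g.NT} {w : List T} (h : g.Parses n [.nonterminal A] w) :
    ∃ m, n = m + 1 ∧ ∃ r ∈ g.rules, r.input = A ∧ g.Parses m r.output w := by
  cases h with
  | nonterminal hr ho h => cases h; exact ⟨_, rfl, _, hr, rfl, by simpa using ho⟩

theorem exists_long_subtree {n m : ℕ} {α : List (Symbol T g.NT)} {w : List T}
    (h : g.Parses n α w) (hm : 0 < m) (hlen : α.length * m < w.length) :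
    ∃ p B w' q, w = p ++ w' ++ q ∧
      g.Derives α (p.map .terminal ++ [.nonterminal B] ++ q.map .terminal) ∧
      g.Parses n [.nonterminal B] w' ∧ m < w'.length := by
  induction h with
  | nil => simp at hlen
  | terminal a _ ih =>
    obtain ⟨p, B, w', q, rfl, hd, hB, hw'⟩ := ih (by simp only [List.length_cons] at hlen; nlinarith)
    exact ⟨a :: p, B, w', q, rfl, hd.append_left [.terminal a], hB, hw'⟩
  | @nonterminal n r α w₁ w₂ hr h₁ h₂ _ ih₂ =>
    by_cases hw₁ : m < w₁.length
    · refine ⟨[], r.input, w₁, w₂, by simp, ?_, by simpa using nonterminal hr h₁ (nil _), hw₁⟩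
      simpa using h₂.derives.append_left [.nonterminal r.input]
    · obtain ⟨p, B, w', q, rfl, hd, hB, hw'⟩ := ih₂ (by simp only [List.length_cons, List.length_append] at hlen; nlinarith)
      refine ⟨w₁ ++ p, B, w', q, by simp, ?_, hB, hw'⟩
      have hA : g.Derives [.nonterminal r.input] (w₁.map .terminal) := by
        simpa using (nonterminal hr h₁ (nil _)).derives
      simpa using (hA.append_right α).trans (hd.append_left (w₁.map .terminal))

end Parses

theorem exists_parses {α : List (Symbol T g.NT)} {w : List T}
    (h : g.Derives α (w.map .terminal)) : ∃ n, g.Parses n α w := by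
  induction h using Relation.ReflTransGen.head_induction_on with
  | refl => exact ⟨0, .of_terminals 0 w⟩
  | head hαβ _ ih =>
    obtain ⟨n, hn⟩ := ih
    exact ⟨n + 1, hn.of_produces hαβ⟩

def DerivesAround (g : ContextFreeGrammar T) (A : g.NT) (x : List T) (B : g.NT) (z : List T) :
    Prop :=
  g.Derives [.nonterminal A] (x.map .terminal ++ [.nonterminal B] ++ z.map .terminal)

namespace DerivesAround

theorem refl (A : g.NT) : g.DerivesAround A [] A [] := by
  simpa [DerivesAround] using Derives.refl (g := g) [.nonterminal A]

theorem trans {A B C : g.NT} {x z x' z' : List T} (h₁ : g.DerivesAround A x B z)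
    (h₂ : g.DerivesAround B x' C z') : g.DerivesAround A (x ++ x') C (z' ++ z) := by
  unfold DerivesAround at *
  have := (h₂.append_left (x.map .terminal)).append_right (z.map .terminal)
  exact h₁.trans (by simpa using this)

theorem pow {B : g.NT} {v z : List T} (h : g.DerivesAround B v B z) (i : ℕ) :
    g.DerivesAround B (listPow v i) B (listPow z i) := by
  induction i with
  | zero => exact refl B
  | succ i ih =>
    rw [listPow_succ', listPow_succ]
    exact ih.trans h

theorem fill {A B : g.NT} {x y z : List T} (h : g.DerivesAround A x B z)
    (hB : g.Derives [.nonterminal B] (y.map .terminal)) :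
    g.Derives [.nonterminal A] ((x ++ y ++ z).map .terminal) := by
  unfold DerivesAround at h
  have := (hB.append_left (x.map .terminal)).append_right (z.map .terminal)
  exact h.trans (by simpa using this)

end DerivesAround

def HasPump (g : ContextFreeGrammar T) (A : g.NT) (w : List T) : Prop :=
  ∃ B x v y z u, w = x ++ v ++ y ++ z ++ u ∧ v ++ z ≠ [] ∧ g.DerivesAround A x B u ∧
    g.DerivesAround B v B z ∧ g.Derives [.nonterminal B] (y.map .terminal)

def HitsRules (g : ContextFreeGrammar T) (s : Finset (ContextFreeRule T g.NT)) (A : g.NT)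
    (w : List T) : Prop :=
  ∃ r ∈ s, ∃ x y z, w = x ++ y ++ z ∧ g.DerivesAround A x r.input z ∧
    g.Derives [.nonterminal r.input] (y.map .terminal)

theorem DerivesAround.hasPump_or_hitsRules {A B : g.NT} {p q w : List T}
    {s : Finset (ContextFreeRule T g.NT)} (h : g.DerivesAround A p B q) :
    g.HasPump B w ∨ g.HitsRules s B w → g.HasPump A (p ++ w ++ q) ∨ g.HitsRules s A (p ++ w ++ q)
  | .inl ⟨C, x, v, y, z, u, hw, hvz, hx, hv, hy⟩ =>
    .inl ⟨C, p ++ x, v, y, z, u ++ q, by simp [hw], hvz, h.trans hx, hv, hy⟩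
  | .inr ⟨r, hr, x, y, z, hw, hx, hy⟩ =>
    .inr ⟨r, hr, p ++ x, y, z ++ q, by simp [hw], h.trans hx, hy⟩

/-- `s` holds the rules applied higher up the path, at the nodes where the yield strictly shrinks;
each of them has cost a factor `K` of length. -/
theorem hasPump_or_hitsRules_of_parses {K : ℕ} (hK : ∀ r ∈ g.rules, r.output.length ≤ K)
    (hK₀ : 0 < K) (n : ℕ) {A : g.NT} {w : List T} {s : Finset (ContextFreeRule T g.NT)}
    (h : g.Parses n [.nonterminal A] w) (hs : s ⊆ g.rules)
    (hlen : K ^ (g.rules.card - s.card) < w.length) :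
    g.HasPump A w ∨ g.HitsRules s A w := by
  classical
  induction n generalizing A w s with
  | zero => obtain ⟨m, hm, -⟩ := h.exists_rule; omega
  | succ n ih =>
    obtain ⟨m, hm, r, hr, rfl, hout⟩ := h.exists_rule
    obtain rfl : n = m := by omega
    by_cases hrs : r ∈ s
    · exact .inr ⟨r, hrs, [], w, [], by simp, .refl _, h.derives⟩
    have hcard : s.card < g.rules.card :=
      Finset.card_lt_card ((Finset.ssubset_iff_of_subset hs).2 ⟨r, hr, hrs⟩)
    have hpow : K ^ (g.rules.card - s.card) = K ^ (g.rules.card - (insert r s).card) * K := by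
      rw [Finset.card_insert_of_notMem hrs, ← pow_succ]; congr 1; omega
    obtain ⟨p, B, w', q, rfl, hd, hB, hw'⟩ := hout.exists_long_subtree (pow_pos hK₀ _)
      (by rw [hpow, mul_comm] at hlen; exact (Nat.mul_le_mul_right _ (hK r hr)).trans_lt hlen)
    have hctx : g.DerivesAround r.input p B q :=
      Produces.trans_derives ⟨r, hr, by simpa using ContextFreeRule.Rewrites.input_output⟩ hd
    by_cases hpq : p ++ q = []
    · obtain ⟨rfl, rfl⟩ := List.append_eq_nil_iff.1 hpq
      exact hctx.hasPump_or_hitsRules (ih hB hs (by simpa using hlen))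
    rcases ih hB (Finset.insert_subset hr hs) hw' with hpump | ⟨r', hr', x, y, z, rfl, hx, hy⟩
    · exact hctx.hasPump_or_hitsRules (.inl hpump)
    rcases Finset.mem_insert.1 hr' with rfl | hr'
    · exact .inl ⟨r'.input, [], p ++ x, y, z ++ q, [], by simp, by simp_all, .refl _,
        hctx.trans hx, hy⟩
    · exact hctx.hasPump_or_hitsRules (.inr ⟨r', hr', x, y, z, rfl, hx, hy⟩)

end ContextFreeGrammar

theorem Language.IsContextFree.exists_pumping {T : Type*} {L : Language T}
    (hL : L.IsContextFree) :
    ∃ p, ∀ w ∈ L, p < w.length → ∃ x v y z u, w = x ++ v ++ y ++ z ++ u ∧ v ++ z ≠ [] ∧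
      ∀ i, x ++ listPow v i ++ y ++ listPow z i ++ u ∈ L := by
  obtain ⟨g, rfl⟩ := hL
  set K := (g.rules.sup fun r => r.output.length) + 1
  have hK : ∀ r ∈ g.rules, r.output.length ≤ K := fun r hr =>
    Nat.le_succ_of_le (Finset.le_sup (f := fun r => r.output.length) hr)
  refine ⟨K ^ g.rules.card, fun w hw hlen => ?_⟩
  obtain ⟨n, hn⟩ := ContextFreeGrammar.exists_parses hw
  rcases ContextFreeGrammar.hasPump_or_hitsRules_of_parses hK (Nat.succ_pos _) n hn
    (Finset.empty_subset _) (by simpa using hlen) with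
    ⟨B, x, v, y, z, u, rfl, hvz, hx, hv, hy⟩ | ⟨_, hr, -⟩
  · refine ⟨x, v, y, z, u, rfl, hvz, fun i => ?_⟩
    simpa using (hx.trans (hv.pow i)).fill hy
  · simp at hr

theorem count_pump {α : Type*} [BEq α] (a : α) (x v y z u : List α) (i : ℕ) :
    (x ++ listPow v i ++ y ++ listPow z i ++ u).count a =
      (x ++ y ++ u).count a + i * (v ++ z).count a := by
  simp only [listPow, List.count_append, List.count_flatten, List.map_replicate,
    List.sum_replicate, smul_eq_mul]
  ring

theorem count_h_eq_one_and_two_pow_count_z_le_of_mem_Lcc' {w : List Alph} (hw : w ∈ Lcc') :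
    w.count Alph.h = 1 ∧ 2 ^ w.count Alph.z ≤ w.count Alph.u + 1 := by
  obtain ⟨n, m, rfl, hnm⟩ := hw
  constructor
  · simp [List.count_replicate]
  · simpa [List.count_replicate] using Nat.sub_le_iff_le_add.1 hnm

theorem exists_not_mem_Lcc'_of_pump {m : ℕ} {x v y z u : List Alph}
    (hw : List.replicate (2 ^ m - 1) Alph.u ++ List.replicate m Alph.z ++ [Alph.h] =
      x ++ v ++ y ++ z ++ u)
    (hvz : v ++ z ≠ []) : ∃ i, x ++ listPow v i ++ y ++ listPow z i ++ u ∉ Lcc' := by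
  by_contra! hpump
  have hcount (a : Alph) : (x ++ y ++ u).count a + (v ++ z).count a =
      (List.replicate (2 ^ m - 1) Alph.u ++ List.replicate m Alph.z ++ [Alph.h]).count a := by
    rw [hw]; simp only [List.count_append]; ring
  have hu : (x ++ y ++ u).count Alph.u + (v ++ z).count Alph.u = 2 ^ m - 1 := by
    rw [hcount]; simp [List.count_replicate]
  have hz : (x ++ y ++ u).count Alph.z + (v ++ z).count Alph.z = m := by
    rw [hcount]; simp [List.count_replicate]
  have hh : (x ++ y ++ u).count Alph.h + (v ++ z).count Alph.h = 1 := by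
    rw [hcount]; simp [List.count_replicate]
  obtain ⟨hh₀, hu₀⟩ := count_h_eq_one_and_two_pow_count_z_le_of_mem_Lcc' (hpump 0)
  obtain ⟨-, hu₂⟩ := count_h_eq_one_and_two_pow_count_z_le_of_mem_Lcc' (hpump 2)
  simp only [count_pump, zero_mul, add_zero] at hh₀ hu₀ hu₂
  have hvz' : 0 < (v ++ z).count Alph.u + (v ++ z).count Alph.z := by
    obtain ⟨c, hc⟩ := List.exists_mem_of_ne_nil _ hvz
    have := List.count_pos_iff.2 hc
    cases c <;> omega
  have := Nat.one_le_two_pow (n := m)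
  rcases Nat.eq_zero_or_pos ((v ++ z).count Alph.z) with hz₀ | hz₀
  · rw [show (x ++ y ++ u).count Alph.z = m by omega] at hu₀
    omega
  · have : 2 ^ (m + 1) ≤ 2 ^ ((x ++ y ++ u).count Alph.z + 2 * (v ++ z).count Alph.z) :=
      Nat.pow_le_pow_right two_pos (by omega)
    rw [pow_succ] at this
    omega

/-- L' = { u^n 0^m h : n ≥ 2^m − 1 } is not context-free. -/
theorem Lcc'_not_contextFree : ¬ Lcc'.IsContextFree := by
  intro hcf
  obtain ⟨p, hp⟩ := hcf.exists_pumping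
  have hmem : List.replicate (2 ^ p - 1) Alph.u ++ List.replicate p Alph.z ++ [Alph.h] ∈ Lcc' :=
    ⟨_, _, rfl, le_rfl⟩
  obtain ⟨x, v, y, z, u, hw, hvz, hpump⟩ := hp _ hmem (by simp; omega)
  obtain ⟨i, hi⟩ := exists_not_mem_Lcc'_of_pump hw hvz
  exact hi (hpump i)
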